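/- arXiv:1402.4825 — 4 statements merged into one kernel-verified Lean document; each statement's English description precedes it below -/
import Mathlib

section
/- Let f be an almost periodic function on ℝ. Then for every λ ∈ ℝ the Fourier–Bohr coefficient of f at λ exists; that is, the limit lim_{T→∞} (1/(2T)) ∫_{−T}^{T} f(t)·exp(−i·λ·t) dt exists in ℂ. -/
/-!
For fixed `lam`, the averages `g ↦ (1/2T) ∫_{-T}^{T} g(t) e^{-i lam t} dt` are `1`-Lipschitz in
the sup norm, uniformly in `T`. For an equicontinuous family with values in a complete space the
set of points where it converges is closed (an `ε/3` argument on Cauchy filters), so it suffices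
to treat trigonometric polynomials. There everything reduces to the mean of `e^{iμt}`, which is
`1` for `μ = 0` and is `O(1/(|μ| T))` otherwise, since the integral is `(e^{iμT} - e^{-iμT})/(iμ)`.
-/

open Complex MeasureTheory Filter Topology

noncomputable section

/-- The set of generalized trigonometric polynomials, viewed as bounded continuous functions. -/
def trigPoly : Set (BoundedContinuousFunction ℝ ℂ) :=
  {f | ∃ (N : ℕ) (a : Fin N → ℂ) (lam : Fin N → ℝ),
    ∀ t : ℝ, f t = ∑ j, a j * Complex.exp (Complex.I * lam j * t)}

/-- The almost periodic functions: the sup-norm closure of the trigonometric polynomials. -/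
def AP : Set (BoundedContinuousFunction ℝ ℂ) := closure trigPoly

/-- `fourierBohrAt f lam c` says that the Fourier–Bohr coefficient of `f` at `lam` exists
and equals `c`. -/
def fourierBohrAt (f : BoundedContinuousFunction ℝ ℂ) (lam : ℝ) (c : ℂ) : Prop :=
  Filter.Tendsto
    (fun T : ℝ => ((1 / (2 * T) : ℝ) : ℂ) *
      ∫ t in (-T)..T, f t * Complex.exp (-Complex.I * lam * t))
    Filter.atTop (nhds c)

/-- The Bohr spectrum of `f`. -/
def bohrSpectrum (f : BoundedContinuousFunction ℝ ℂ) : Set ℝ :=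
  {lam | ∃ c : ℂ, c ≠ 0 ∧ fourierBohrAt f lam c}

/-- `APin Λ` is the algebra `AP_Λ` of almost periodic functions with Bohr spectrum in `Λ`. -/
def APin (Λ : Set ℝ) : Set (BoundedContinuousFunction ℝ ℂ) :=
  {f | f ∈ AP ∧ bohrSpectrum f ⊆ Λ}

theorem Equicontinuous.isClosed_setOf_cauchy_map {ι X α : Type*} [TopologicalSpace X]
    [UniformSpace α] {l : Filter ι} [l.NeBot] {F : ι → X → α} (hF : Equicontinuous F) :
    IsClosed {x | Cauchy (l.map (F · x))} := by
  refine closure_subset_iff_isClosed.mp fun x hx ↦ cauchy_map_iff'.mpr fun U hU ↦ ?_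
  obtain ⟨V, hV, hVsymm, hVU⟩ := comp_comp_symm_mem_uniformity_sets hU
  obtain ⟨y, hxy, hy⟩ := mem_closure_iff_nhds.mp hx _ (hF x V hV)
  have hyV : ∀ᶠ p in l ×ˢ l, (F p.1 y, F p.2 y) ∈ V := cauchy_map_iff'.mp hy hV
  refine Filter.mem_map.mpr ?_
  filter_upwards [hyV] with p hp
  exact hVU ⟨F p.2 y, ⟨F p.1 y, hxy p.1, hp⟩, SetRel.symm V (hxy p.2)⟩

theorem Equicontinuous.isClosed_setOf_exists_tendsto {ι X α : Type*} [TopologicalSpace X]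
    [UniformSpace α] [CompleteSpace α] {l : Filter ι} [l.NeBot] {F : ι → X → α}
    (hF : Equicontinuous F) : IsClosed {x | ∃ c, Tendsto (F · x) l (𝓝 c)} := by
  simpa only [← cauchy_map_iff_exists_tendsto] using hF.isClosed_setOf_cauchy_map

section IntervalMean

variable {E : Type*} [NormedAddCommGroup E] [NormedSpace ℝ E]

def intervalMean (g : ℝ → E) (T : ℝ) : E := (1 / (2 * T)) • ∫ t in (-T)..T, g t

theorem norm_intervalMean_le {g : ℝ → E} {C : ℝ} (hg : ∀ t, ‖g t‖ ≤ C) (T : ℝ) :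
    ‖intervalMean g T‖ ≤ C := by
  rcases eq_or_ne T 0 with rfl | hT
  · simpa [intervalMean] using (norm_nonneg _).trans (hg 0)
  calc ‖intervalMean g T‖ ≤ |1 / (2 * T)| * (C * |T - -T|) := by
        rw [intervalMean, norm_smul, Real.norm_eq_abs]
        gcongr
        exact intervalIntegral.norm_integral_le_of_norm_le_const fun t _ ↦ hg t
    _ = C := by
        rw [sub_neg_eq_add, ← two_mul, abs_div, abs_one]
        field_simp

theorem intervalMean_const [CompleteSpace E] (c : E) {T : ℝ} (hT : T ≠ 0) :
    intervalMean (fun _ ↦ c) T = c := by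
  rw [intervalMean, intervalIntegral.integral_const, smul_smul, sub_neg_eq_add, ← two_mul,
    one_div_mul_cancel (by positivity), one_smul]

end IntervalMean

theorem fourierBohrAt_iff {f : BoundedContinuousFunction ℝ ℂ} {lam : ℝ} {c : ℂ} :
    fourierBohrAt f lam c ↔
      Tendsto (intervalMean fun t ↦ f t * Complex.exp (-Complex.I * lam * t)) atTop (𝓝 c) := by
  unfold fourierBohrAt intervalMean
  simp only [Complex.real_smul]

theorem norm_intervalMean_exp_le {μ : ℝ} (hμ : μ ≠ 0) {T : ℝ} (hT : 0 < T) :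
    ‖intervalMean (fun t : ℝ ↦ Complex.exp (Complex.I * μ * t)) T‖ ≤ |μ|⁻¹ * T⁻¹ := by
  have hIμ : Complex.I * μ ≠ 0 := mul_ne_zero Complex.I_ne_zero (ofReal_ne_zero.2 hμ)
  have hexp (s : ℝ) : ‖Complex.exp (Complex.I * μ * s)‖ = 1 := by
    simp [Complex.norm_exp]
  rw [intervalMean, integral_exp_mul_complex hIμ, norm_smul,
    Real.norm_of_nonneg (by positivity : (0 : ℝ) ≤ 1 / (2 * T)), norm_div]
  calc 1 / (2 * T) * (‖Complex.exp (Complex.I * μ * T) - Complex.exp (Complex.I * μ * ↑(-T))‖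
        / ‖Complex.I * μ‖)
      ≤ (1 / (2 * T)) * ((1 + 1) / |μ|) := by
        rw [norm_mul, Complex.norm_I, one_mul, Complex.norm_real, Real.norm_eq_abs]
        gcongr
        exact (norm_sub_le _ _).trans_eq (by rw [hexp, hexp])
    _ = |μ|⁻¹ * T⁻¹ := by field_simp; ring

theorem tendsto_intervalMean_exp (μ : ℝ) :
    Tendsto (intervalMean fun t : ℝ ↦ Complex.exp (Complex.I * μ * t)) atTop
      (𝓝 (if μ = 0 then 1 else 0)) := by
  split_ifs with hμ
  · subst hμ
    refine tendsto_const_nhds.congr' ?_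
    filter_upwards [eventually_ne_atTop 0] with T hT
    simpa using (intervalMean_const (1 : ℂ) hT).symm
  · refine squeeze_zero_norm' ?_ (by simpa using tendsto_inv_atTop_zero.const_mul |μ|⁻¹)
    filter_upwards [eventually_gt_atTop 0] with T hT
    exact norm_intervalMean_exp_le hμ hT

theorem intervalMean_sum_const_mul {ι : Type*} (s : Finset ι) (a : ι → ℂ) {g : ι → ℝ → ℂ}
    (hg : ∀ j ∈ s, Continuous (g j)) (T : ℝ) :
    intervalMean (fun t ↦ ∑ j ∈ s, a j * g j t) T = ∑ j ∈ s, a j * intervalMean (g j) T := by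
  simp only [intervalMean]
  rw [intervalIntegral.integral_finsetSum fun j hj ↦
    ((hg j hj).const_mul (a j)).intervalIntegrable _ _, Finset.smul_sum]
  simp_rw [intervalIntegral.integral_const_mul, mul_smul_comm]

theorem exists_fourierBohrAt_of_mem_trigPoly {p : BoundedContinuousFunction ℝ ℂ}
    (hp : p ∈ trigPoly) (lam : ℝ) : ∃ c, fourierBohrAt p lam c := by
  obtain ⟨N, a, μ, hp⟩ := hp
  have hshift : (fun t : ℝ ↦ p t * Complex.exp (-Complex.I * lam * t)) =
      fun t : ℝ ↦ ∑ j, a j * Complex.exp (Complex.I * ↑(μ j - lam) * t) := by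
    funext t
    simp only [hp t, Finset.sum_mul, mul_assoc, ← Complex.exp_add]
    congr! 3
    push_cast
    ring
  refine ⟨∑ j, a j * if μ j - lam = 0 then 1 else 0, fourierBohrAt_iff.mpr ?_⟩
  rw [hshift, funext (intervalMean_sum_const_mul _ a fun j _ ↦ by fun_prop)]
  exact tendsto_finsetSum _ fun j _ ↦ (tendsto_intervalMean_exp _).const_mul (a j)

theorem lipschitzWith_intervalMean_mul_exp (lam T : ℝ) :
    LipschitzWith 1 fun g : BoundedContinuousFunction ℝ ℂ ↦
      intervalMean (fun t ↦ g t * Complex.exp (-Complex.I * lam * t)) T := by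
  refine LipschitzWith.of_dist_le_mul fun g h ↦ ?_
  have hint (k : BoundedContinuousFunction ℝ ℂ) : IntervalIntegrable
      (fun t ↦ k t * Complex.exp (-Complex.I * lam * t)) volume (-T) T :=
    Continuous.intervalIntegrable (by fun_prop) _ _
  rw [dist_eq_norm, dist_eq_norm, NNReal.coe_one, one_mul, intervalMean, intervalMean,
    ← smul_sub, ← intervalIntegral.integral_sub (hint g) (hint h)]
  refine norm_intervalMean_le (g := fun t ↦ _ - _) (fun t ↦ ?_) T
  rw [← sub_mul, norm_mul, Complex.norm_exp]
  simpa using (g - h).norm_coe_le_norm t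

/-- For every almost periodic function `f` and every `λ ∈ ℝ`, the Fourier–Bohr
coefficient of `f` at `λ` exists. -/
theorem fourierBohr_exists (f : BoundedContinuousFunction ℝ ℂ) (hf : f ∈ AP) (lam : ℝ) :
    ∃ c : ℂ, fourierBohrAt f lam c := by
  have hclosed : IsClosed {g | ∃ c, fourierBohrAt g lam c} := by
    simp only [fourierBohrAt_iff]
    exact (LipschitzWith.uniformEquicontinuous _ 1 (lipschitzWith_intervalMean_mul_exp lam)
      ).equicontinuous.isClosed_setOf_exists_tendsto
  exact closure_minimal (fun p hp ↦ exists_fourierBohrAt_of_mem_trigPoly hp lam) hclosed hf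
end
end

section
/- The Fourier–Bohr series uniquely determines an almost periodic function: if f ∈ AP and f̂(λ) = 0 for every λ ∈ ℝ (i.e., for every λ ∈ ℝ, (1/(2T)) ∫_{−T}^{T} f(t)·exp(−i·λ·t) dt → 0 as T → ∞), then f is identically zero. -/
/-!
Vanishing Fourier–Bohr coefficients make the mean of `f * conj p` tend to zero for every
trigonometric polynomial `p`; since `f * conj p` approximates `|f|²` uniformly, the mean of `|f|²`
over `[-T, T]` tends to zero as well.

On the other hand, every `f ∈ AP` is almost periodic in Bohr's sense: its `ε`-almost periods form
a relatively dense set. For a trigonometric polynomial this is a recurrence property of the curve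
`t ↦ (exp (i λ_j t))_j`, whose range is totally bounded and on which translation acts isometrically;
the property survives uniform limits. Hence if `f t₀ ≠ 0`, then `|f| ≥ |f t₀| / 2` on intervals of a
fixed length around a relatively dense set of points, and the mean of `|f|²` stays bounded away
from zero.
-/

open Complex MeasureTheory Filter Topology

noncomputable section

open ComplexConjugate

def IsRelativelyDense (S : Set ℝ) : Prop :=
  ∃ L, ∀ x, ∃ τ ∈ S, |τ - x| ≤ L

theorem IsRelativelyDense.mono {S S' : Set ℝ} (hS : IsRelativelyDense S) (h : S ⊆ S') :
    IsRelativelyDense S' :=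
  let ⟨L, hL⟩ := hS
  ⟨L, fun x => let ⟨τ, hτ, hτx⟩ := hL x; ⟨τ, h hτ, hτx⟩⟩

theorem IsRelativelyDense.preimage_sub_const {S : Set ℝ} (hS : IsRelativelyDense S) (c : ℝ) :
    IsRelativelyDense ((· - c) ⁻¹' S) :=
  let ⟨L, hL⟩ := hS
  ⟨L, fun x => let ⟨τ, hτ, hτx⟩ := hL (x - c)
    ⟨τ + c, by simpa using hτ, by rwa [sub_sub_eq_add_sub] at hτx⟩⟩

theorem isRelativelyDense_dist_lt_of_totallyBounded {X : Type*} [PseudoMetricSpace X]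
    {φ : ℝ → X} (hφ : TotallyBounded (Set.range φ))
    (hinv : ∀ s t, dist (φ s) (φ t) = dist (φ (s - t)) (φ 0)) {η : ℝ} (hη : 0 < η) :
    IsRelativelyDense {τ | dist (φ τ) (φ 0) < η} := by
  obtain ⟨net, hnet_range, hnet_fin, hcover⟩ := Metric.finite_approx_of_totallyBounded hφ η hη
  have hnet_preimage : ∀ y ∈ net, ∃ t, φ t = y := fun y hy => hnet_range hy
  choose! t ht using hnet_preimage
  refine ⟨∑ y ∈ hnet_fin.toFinset, |t y|, fun x => ?_⟩
  obtain ⟨y, hy, hxy⟩ := Set.mem_iUnion₂.1 (hcover ⟨x, rfl⟩)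
  refine ⟨x - t y, ?_, ?_⟩
  · show dist (φ (x - t y)) (φ 0) < η
    rw [← hinv, ht y hy]
    exact hxy
  · rw [sub_sub_cancel_left, abs_neg]
    exact Finset.single_le_sum (fun y _ => abs_nonneg (t y)) (hnet_fin.mem_toFinset.2 hy)

def almostPeriods {E : Type*} [PseudoMetricSpace E] (f : ℝ → E) (ε : ℝ) : Set ℝ :=
  {τ | ∀ t, dist (f (t + τ)) (f t) ≤ ε}

def IsBohrAlmostPeriodic {E : Type*} [PseudoMetricSpace E] (f : ℝ → E) : Prop :=
  ∀ ε > 0, IsRelativelyDense (almostPeriods f ε)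

theorem isBohrAlmostPeriodic_of_forall_dist_le {E : Type*} [PseudoMetricSpace E] {f : ℝ → E}
    (h : ∀ ε > 0, ∃ g : ℝ → E, IsBohrAlmostPeriodic g ∧ ∀ t, dist (f t) (g t) ≤ ε) :
    IsBohrAlmostPeriodic f := by
  intro ε hε
  obtain ⟨g, hg, hfg⟩ := h (ε / 3) (by positivity)
  refine (hg (ε / 3) (by positivity)).mono fun τ hτ t => ?_
  calc dist (f (t + τ)) (f t)
      ≤ dist (f (t + τ)) (g (t + τ)) + dist (g (t + τ)) (g t) + dist (g t) (f t) :=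
        dist_triangle4 _ _ _ _
    _ ≤ ε / 3 + ε / 3 + ε / 3 := by gcongr; exacts [hfg _, hτ t, (dist_comm _ _).trans_le (hfg t)]
    _ = ε := by ring

def expVec {N : ℕ} (lam : Fin N → ℝ) (t : ℝ) : Fin N → ℂ :=
  fun j => exp (I * lam j * t)

theorem norm_expVec_apply {N : ℕ} (lam : Fin N → ℝ) (t : ℝ) (j : Fin N) :
    ‖expVec lam t j‖ = 1 := by
  rw [expVec, show I * lam j * t = ((lam j * t : ℝ) : ℂ) * I by push_cast; ring,
    norm_exp_ofReal_mul_I]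

theorem expVec_add {N : ℕ} (lam : Fin N → ℝ) (s t : ℝ) :
    expVec lam (s + t) = expVec lam s * expVec lam t := by
  ext j
  simp only [expVec, Pi.mul_apply, ← exp_add]
  push_cast
  ring_nf

theorem dist_expVec_mul_left {N : ℕ} (lam : Fin N → ℝ) (t : ℝ) (v w : Fin N → ℂ) :
    dist (expVec lam t * v) (expVec lam t * w) = dist v w := by
  have h : ∀ j, ‖expVec lam t j‖₊ = 1 := fun j => NNReal.eq (norm_expVec_apply lam t j)
  simp only [dist_eq_norm, ← mul_sub, Pi.norm_def, Pi.mul_apply, nnnorm_mul, h, one_mul]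

theorem dist_expVec {N : ℕ} (lam : Fin N → ℝ) (s t : ℝ) :
    dist (expVec lam s) (expVec lam t) = dist (expVec lam (s - t)) (expVec lam 0) := by
  rw [← dist_expVec_mul_left lam t (expVec lam (s - t)), ← expVec_add, ← expVec_add,
    add_sub_cancel, add_zero]

theorem totallyBounded_range_expVec {N : ℕ} (lam : Fin N → ℝ) :
    TotallyBounded (Set.range (expVec lam)) := by
  refine (isCompact_closedBall (0 : Fin N → ℂ) 1).totallyBounded.subset ?_
  rintro - ⟨t, rfl⟩
  rw [mem_closedBall_zero_iff]
  exact pi_norm_le_iff_of_nonneg zero_le_one |>.2 fun j => (norm_expVec_apply lam t j).le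

theorem isBohrAlmostPeriodic_of_mem_trigPoly {p : BoundedContinuousFunction ℝ ℂ}
    (hp : p ∈ trigPoly) : IsBohrAlmostPeriodic p := by
  obtain ⟨N, a, lam, hpt⟩ := hp
  intro ε hε
  set K := ∑ j, ‖a j‖
  have hK : 0 ≤ K := Finset.sum_nonneg fun j _ => norm_nonneg (a j)
  refine (isRelativelyDense_dist_lt_of_totallyBounded (totallyBounded_range_expVec lam)
    (dist_expVec lam) (η := ε / (K + 1)) (by positivity)).mono fun τ hτ t => ?_
  have hcoord : ∀ j, dist (expVec lam (t + τ) j) (expVec lam t j) ≤ ε / (K + 1) := by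
    intro j
    refine (dist_le_pi_dist _ _ j).trans ?_
    rw [dist_expVec, add_sub_cancel_left]
    exact le_of_lt hτ
  calc dist (p (t + τ)) (p t)
      = ‖∑ j, a j * (expVec lam (t + τ) j - expVec lam t j)‖ := by
        simp only [dist_eq_norm, hpt, expVec, mul_sub, Finset.sum_sub_distrib]
    _ ≤ ∑ j, ‖a j‖ * (ε / (K + 1)) := by
        refine (norm_sum_le _ _).trans (Finset.sum_le_sum fun j _ => ?_)
        rw [norm_mul, ← dist_eq_norm]
        exact mul_le_mul_of_nonneg_left (hcoord j) (norm_nonneg _)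
    _ = K / (K + 1) * ε := by rw [← Finset.sum_mul]; ring
    _ ≤ ε := mul_le_of_le_one_left hε.le ((div_le_one (by positivity)).2 (by linarith))

theorem isBohrAlmostPeriodic_of_mem_AP {f : BoundedContinuousFunction ℝ ℂ} (hf : f ∈ AP) :
    IsBohrAlmostPeriodic f := by
  refine isBohrAlmostPeriodic_of_forall_dist_le fun ε hε => ?_
  obtain ⟨p, hp, hfp⟩ := Metric.mem_closure_iff.1 hf ε hε
  exact ⟨p, isBohrAlmostPeriodic_of_mem_trigPoly hp,
    fun t => (BoundedContinuousFunction.dist_coe_le_dist t).trans hfp.le⟩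

section Mean

variable {E : Type*} [NormedAddCommGroup E] [NormedSpace ℝ E]

def mean (g : ℝ → E) (T : ℝ) : E :=
  (2 * T)⁻¹ • ∫ t in -T..T, g t

theorem norm_mean_le {g : ℝ → E} {C T : ℝ} (hT : 0 < T) (h : ∀ t, ‖g t‖ ≤ C) :
    ‖mean g T‖ ≤ C := by
  rw [mean, norm_smul, Real.norm_of_nonneg (by positivity)]
  calc (2 * T)⁻¹ * ‖∫ t in -T..T, g t‖ ≤ (2 * T)⁻¹ * (C * |T - -T|) := by
        gcongr; exact intervalIntegral.norm_integral_le_of_norm_le_const fun t _ => h t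
    _ = C := by rw [sub_neg_eq_add, abs_of_pos (by linarith)]; field_simp; ring

theorem mean_sub {g g' : ℝ → E} (hg : Continuous g) (hg' : Continuous g') (T : ℝ) :
    mean (fun t => g t - g' t) T = mean g T - mean g' T := by
  rw [mean, intervalIntegral.integral_sub (hg.intervalIntegrable _ _)
    (hg'.intervalIntegrable _ _), smul_sub, mean, mean]

theorem mean_finsetSum {ι : Type*} (s : Finset ι) {g : ι → ℝ → E}
    (hg : ∀ j ∈ s, Continuous (g j)) (T : ℝ) :
    mean (fun t => ∑ j ∈ s, g j t) T = ∑ j ∈ s, mean (g j) T := by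
  rw [mean, intervalIntegral.integral_finsetSum fun j hj => (hg j hj).intervalIntegrable _ _,
    Finset.smul_sum]
  rfl

theorem tendsto_mean_zero_of_forall_norm_sub_le {g : ℝ → E} (hg : Continuous g)
    (h : ∀ ε > 0, ∃ g' : ℝ → E, Continuous g' ∧ Tendsto (mean g') atTop (𝓝 0) ∧
      ∀ t, ‖g t - g' t‖ ≤ ε) :
    Tendsto (mean g) atTop (𝓝 0) := by
  rw [Metric.tendsto_atTop]
  intro ε hε
  obtain ⟨g', hg'c, hg'lim, hgg'⟩ := h (ε / 2) (by positivity)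
  obtain ⟨T₀, hT₀⟩ := Metric.tendsto_atTop.1 hg'lim (ε / 2) (by positivity)
  refine ⟨max T₀ 1, fun T hT => ?_⟩
  have hT_pos : 0 < T := lt_of_lt_of_le one_pos (le_of_max_le_right hT)
  have hg'T := hT₀ T (le_of_max_le_left hT)
  rw [dist_zero_right] at hg'T ⊢
  calc ‖mean g T‖ = ‖mean (fun t => g t - g' t) T + mean g' T‖ := by
        rw [mean_sub hg hg'c, sub_add_cancel]
    _ ≤ ‖mean (fun t => g t - g' t) T‖ + ‖mean g' T‖ := norm_add_le _ _
    _ < ε / 2 + ε / 2 := add_lt_add_of_le_of_lt (norm_mean_le hT_pos hgg') hg'T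
    _ = ε := add_halves ε

end Mean

theorem mean_const_mul (c : ℂ) (g : ℝ → ℂ) (T : ℝ) :
    mean (fun t => c * g t) T = c * mean g T := by
  rw [mean, mean, intervalIntegral.integral_const_mul, mul_smul_comm]

theorem mean_ofReal (g : ℝ → ℝ) (T : ℝ) :
    mean (fun t => (g t : ℂ)) T = ((mean g T : ℝ) : ℂ) := by
  rw [mean, mean, intervalIntegral.integral_ofReal, smul_eq_mul, Complex.ofReal_mul,
    Complex.real_smul]

theorem exists_le_integral_of_isRelativelyDense {g : ℝ → ℝ} (hg : Continuous g)
    (hg0 : ∀ t, 0 ≤ g t) {r δ : ℝ} (hδ : 0 < δ)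
    (hS : IsRelativelyDense {u | ∀ t ∈ Set.Icc (u - δ) (u + δ), r ≤ g t}) :
    ∃ M > 0, ∀ x, 2 * δ * r ≤ ∫ t in x..x + M, g t := by
  obtain ⟨L, hL⟩ := hS
  have hL0 : 0 ≤ L := let ⟨τ, _, hτ⟩ := hL 0; (abs_nonneg _).trans hτ
  refine ⟨2 * L + 2 * δ, by positivity, fun x => ?_⟩
  obtain ⟨u, hu, hux⟩ := hL (x + L + δ)
  obtain ⟨hux₁, hux₂⟩ := abs_le.1 hux
  calc 2 * δ * r = ∫ _ in (u - δ)..(u + δ), r := by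
        rw [intervalIntegral.integral_const, smul_eq_mul]; ring
    _ ≤ ∫ t in (u - δ)..(u + δ), g t :=
        intervalIntegral.integral_mono_on (by linarith) intervalIntegrable_const
          (hg.intervalIntegrable _ _) hu
    _ ≤ ∫ t in x..x + (2 * L + 2 * δ), g t :=
        intervalIntegral.integral_mono_interval (by linarith) (by linarith) (by linarith)
          (Eventually.of_forall hg0) (hg.intervalIntegrable _ _)

theorem le_mean_of_le_integral {g : ℝ → ℝ} (hg : Continuous g) {M d : ℝ} (hM : 0 < M)
    (h : ∀ x, d ≤ ∫ t in x..x + M, g t) {n : ℕ} (hn : 0 < n) : d / M ≤ mean g (n * M) := by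
  set a : ℕ → ℝ := fun k => -(n * M) + k * M
  have hsum := intervalIntegral.sum_integral_adjacent_intervals (μ := volume) (a := a)
    (n := 2 * n) fun k _ => hg.intervalIntegrable _ _
  have ha : a 0 = -(n * M) ∧ a (2 * n) = n * M := by simp only [a]; push_cast; constructor <;> ring
  rw [ha.1, ha.2] at hsum
  have hstep : ∀ k, a (k + 1) = a k + M := fun k => by simp only [a]; push_cast; ring
  have hwindows : 2 * n * d ≤ ∫ t in -(n * M)..n * M, g t := by
    rw [← hsum]
    calc (2 * n : ℝ) * d = ∑ _k ∈ Finset.range (2 * n), d := by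
          rw [Finset.sum_const, Finset.card_range, nsmul_eq_mul]; push_cast; ring
      _ ≤ _ := Finset.sum_le_sum fun k _ => hstep k ▸ h (a k)
  have hn' : (0 : ℝ) < n := Nat.cast_pos.2 hn
  rw [mean, smul_eq_mul]
  calc d / M = (2 * (n * M))⁻¹ * (2 * n * d) := by field_simp
    _ ≤ _ := by gcongr

theorem IsBohrAlmostPeriodic.exists_isRelativelyDense_le_norm {E : Type*} [NormedAddCommGroup E]
    {f : ℝ → E} (hf : IsBohrAlmostPeriodic f) {t₀ : ℝ} (hc : ContinuousAt f t₀)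
    (h0 : f t₀ ≠ 0) :
    ∃ r > 0, ∃ δ > 0, IsRelativelyDense {u | ∀ t ∈ Set.Icc (u - δ) (u + δ), r ≤ ‖f t‖} := by
  set c := ‖f t₀‖
  have hc0 : 0 < c := norm_pos_iff.2 h0
  obtain ⟨δ, hδ, hnear⟩ := Metric.continuousAt_iff.1 hc (c / 4) (by positivity)
  refine ⟨c / 2, by positivity, δ / 2, by positivity,
    ((hf (c / 4) (by positivity)).preimage_sub_const t₀).mono fun u hu t ht => ?_⟩
  set s := t - (u - t₀)
  have hshift : dist (f t) (f s) ≤ c / 4 := by simpa [s] using hu s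
  have hs : dist (f s) (f t₀) < c / 4 := hnear <| by
    rw [Real.dist_eq, abs_lt]; constructor <;> linarith [ht.1, ht.2]
  have htri : c - ‖f t‖ ≤ dist (f t₀) (f t) := by
    rw [dist_eq_norm]; exact norm_sub_norm_le _ _
  linarith [dist_triangle (f t₀) (f s) (f t), dist_comm (f t₀) (f s), dist_comm (f s) (f t)]

theorem IsBohrAlmostPeriodic.eq_zero_of_tendsto_mean_norm_sq {E : Type*} [NormedAddCommGroup E]
    {f : ℝ → E} (hf : IsBohrAlmostPeriodic f) (hc : Continuous f)
    (h : Tendsto (mean fun t => ‖f t‖ ^ 2) atTop (𝓝 0)) : f = 0 := by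
  by_contra hne
  obtain ⟨t₀, ht₀⟩ : ∃ t₀, f t₀ ≠ 0 := by
    by_contra! h0
    exact hne (funext h0)
  obtain ⟨r, hr, δ, hδ, hdense⟩ := hf.exists_isRelativelyDense_le_norm hc.continuousAt ht₀
  obtain ⟨M, hM, hwindow⟩ := exists_le_integral_of_isRelativelyDense (hc.norm.pow 2)
    (fun t => sq_nonneg ‖f t‖) hδ
    (hdense.mono fun u hu t ht => pow_le_pow_left₀ hr.le (hu t ht) 2)
  have hmean_le : 2 * δ * r ^ 2 / M ≤ 0 :=
    ge_of_tendsto (h.comp (tendsto_natCast_atTop_atTop.atTop_mul_const hM))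
      (eventually_atTop.2 ⟨1, fun n hn => le_mean_of_le_integral (hc.norm.pow 2) hM hwindow hn⟩)
  have hmean_pos : 0 < 2 * δ * r ^ 2 / M := by positivity
  linarith

theorem fourierBohrAt_iff_tendsto_mean (f : BoundedContinuousFunction ℝ ℂ) (lam : ℝ) (c : ℂ) :
    fourierBohrAt f lam c ↔
      Tendsto (mean fun t => f t * exp (-I * lam * t)) atTop (𝓝 c) := by
  unfold fourierBohrAt mean
  simp only [one_div, Complex.real_smul]

theorem tendsto_mean_mul_conj_of_mem_trigPoly {f p : BoundedContinuousFunction ℝ ℂ}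
    (h : ∀ lam : ℝ, fourierBohrAt f lam 0) (hp : p ∈ trigPoly) :
    Tendsto (mean fun t => f t * conj (p t)) atTop (𝓝 0) := by
  obtain ⟨N, a, lam, hpt⟩ := hp
  have hexpand : ∀ t, f t * conj (p t) =
      ∑ j, conj (a j) * (f t * exp (-I * lam j * t)) := by
    intro t
    simp only [hpt, map_sum, map_mul, ← exp_conj, Complex.conj_I, Complex.conj_ofReal,
      Finset.mul_sum]
    exact Finset.sum_congr rfl fun j _ => by ring_nf
  have hcont : ∀ j, Continuous fun t : ℝ => f t * exp (-I * lam j * t) :=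
    fun j => f.continuous.mul (by fun_prop)
  simp_rw [hexpand]
  have hmean : ∀ T, (mean fun t => ∑ j, conj (a j) * (f t * exp (-I * lam j * t))) T =
      ∑ j, conj (a j) * mean (fun t => f t * exp (-I * lam j * t)) T := fun T => by
    rw [mean_finsetSum Finset.univ (g := fun j t => conj (a j) * (f t * exp (-I * lam j * t)))
      (fun j _ => continuous_const.mul (hcont j))]
    simp only [mean_const_mul]
  rw [funext hmean, show (0 : ℂ) = ∑ j : Fin N, conj (a j) * 0 by simp]
  exact tendsto_finsetSum _ fun j _ =>
    ((fourierBohrAt_iff_tendsto_mean f _ 0).1 (h (lam j))).const_mul _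

theorem tendsto_mean_norm_sq_of_fourierBohrAt_zero {f : BoundedContinuousFunction ℝ ℂ}
    (hf : f ∈ AP) (h : ∀ lam : ℝ, fourierBohrAt f lam 0) :
    Tendsto (mean fun t => ‖f t‖ ^ 2) atTop (𝓝 0) := by
  have hsq : Tendsto (mean fun t => f t * conj (f t)) atTop (𝓝 0) := by
    refine tendsto_mean_zero_of_forall_norm_sub_le
      (f.continuous.mul (Complex.continuous_conj.comp f.continuous)) fun ε hε => ?_
    obtain ⟨p, hp, hfp⟩ := Metric.mem_closure_iff.1 hf (ε / (‖f‖ + 1)) (by positivity)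
    refine ⟨fun t => f t * conj (p t),
      f.continuous.mul (Complex.continuous_conj.comp p.continuous),
      tendsto_mean_mul_conj_of_mem_trigPoly h hp, fun t => ?_⟩
    calc ‖f t * conj (f t) - f t * conj (p t)‖
        = ‖f t‖ * dist (f t) (p t) := by
          rw [← mul_sub, ← map_sub, norm_mul, Complex.norm_conj, dist_eq_norm]
      _ ≤ ‖f‖ * (ε / (‖f‖ + 1)) := by
          gcongr
          exacts [f.norm_coe_le_norm t,
            (BoundedContinuousFunction.dist_coe_le_dist t).trans hfp.le]
      _ ≤ ε := by
          rw [mul_div_assoc']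
          exact (div_le_iff₀ (by positivity)).2 (by nlinarith [norm_nonneg f])
  have hnorm_sq : (mean fun t => f t * conj (f t)) =
      fun T => ((mean (fun t => ‖f t‖ ^ 2) T : ℝ) : ℂ) := by
    funext T
    simp only [Complex.mul_conj', ← Complex.ofReal_pow, mean_ofReal]
  rw [hnorm_sq, ← Complex.ofReal_zero] at hsq
  exact Filter.tendsto_ofReal_iff.1 hsq

/-- The Fourier–Bohr series uniquely determines an almost periodic function: if all
Fourier–Bohr coefficients of `f ∈ AP` vanish, then `f = 0`. -/
theorem fourierBohr_unique (f : BoundedContinuousFunction ℝ ℂ) (hf : f ∈ AP)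
    (h : ∀ lam : ℝ, fourierBohrAt f lam 0) :
    f = 0 := by
  refine DFunLike.coe_injective ?_
  rw [BoundedContinuousFunction.coe_zero]
  exact (isBohrAlmostPeriodic_of_mem_AP hf).eq_zero_of_tendsto_mean_norm_sq f.continuous
    (tendsto_mean_norm_sq_of_fourierBohrAt_zero hf h)
end
end

section
/- An element F ∈ AP is invertible in AP (i.e., there exists G ∈ AP with F·G = 1 identically on ℝ) if and only if there exists δ > 0 with |F(t)| ≥ δ for all t ∈ ℝ. -/
open Complex MeasureTheory Filter Topology

noncomputable section

/-!
A function bounded below in modulus is invertible in the C⋆-algebra `ℝ →ᵇ ℂ`, its inverse being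
`t ↦ (F t)⁻¹`. The almost periodic functions form a closed star subalgebra of `ℝ →ᵇ ℂ` (the
closure of the star algebra generated by the characters `t ↦ exp (i l t)`), and closed star
subalgebras of a C⋆-algebra are inverse-closed by spectral permanence, so the inverse lies in AP.
-/

open Set BoundedContinuousFunction

namespace BoundedContinuousFunction

variable {X R : Type*} [TopologicalSpace X] [NormedDivisionRing R]

theorem exists_le_norm_of_mul_eq_one {f g : X →ᵇ R} (hfg : ∀ x, f x * g x = 1) :
    ∃ δ > 0, ∀ x, δ ≤ ‖f x‖ := by
  refine ⟨(‖g‖ + 1)⁻¹, by positivity, fun x => ?_⟩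
  rw [inv_le_iff_one_le_mul₀ (by positivity)]
  calc (1 : ℝ) = ‖f x‖ * ‖g x‖ := by rw [← norm_mul, hfg x, norm_one]
    _ ≤ ‖f x‖ * (‖g‖ + 1) := by gcongr; linarith [g.norm_coe_le_norm x]

theorem isUnit_of_le_norm {f : X →ᵇ R} {δ : ℝ} (hδ : 0 < δ) (hf : ∀ x, δ ≤ ‖f x‖) :
    IsUnit f := by
  have hne : ∀ x, f x ≠ 0 := fun x h => by linarith [hf x, norm_eq_zero.mpr h]
  let g : X →ᵇ R := ofNormedAddCommGroup (fun x => (f x)⁻¹) (f.continuous.inv₀ hne) δ⁻¹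
    fun x => by rw [norm_inv]; exact inv_anti₀ hδ (hf x)
  refine ⟨⟨f, g, ?_, ?_⟩, rfl⟩ <;> ext x
  · exact mul_inv_cancel₀ (hne x)
  · exact inv_mul_cancel₀ (hne x)

end BoundedContinuousFunction

theorem StarSubalgebra.exists_mul_eq_one_of_isUnit {A : Type*} [CStarAlgebra A]
    (S : StarSubalgebra ℂ A) [IsClosed (S : Set A)] {a : A} (ha : a ∈ S) (hu : IsUnit a) :
    ∃ b ∈ S, a * b = 1 := by
  obtain ⟨u, hu⟩ := (S.coe_isUnit (a := ⟨a, ha⟩)).mp hu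
  refine ⟨_, (u⁻¹ : Sˣ).1.2, ?_⟩
  calc a * _ = ((u * u⁻¹ : Sˣ) : S) := by rw [Units.val_mul, hu]; rfl
    _ = 1 := by rw [mul_inv_cancel]; rfl

def expChar (l : ℝ) : ℝ →ᵇ ℂ :=
  ofNormedAddCommGroup (fun t => exp (I * l * t)) (by fun_prop) 1
    fun t => by simp [norm_exp]

@[simp]
theorem expChar_apply (l t : ℝ) : expChar l t = exp (I * l * t) := rfl

theorem expChar_add (a b : ℝ) : expChar (a + b) = expChar a * expChar b := by
  ext t
  simp only [expChar_apply, mul_apply, ← exp_add]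
  push_cast
  ring_nf

theorem expChar_zero : expChar 0 = 1 := by
  ext t
  simp

theorem star_expChar (l : ℝ) : star (expChar l) = expChar (-l) := by
  ext t
  simp only [star_apply, expChar_apply, Complex.star_def, ← exp_conj, map_mul, conj_I, conj_ofReal]
  push_cast
  ring_nf

def expCharSubmonoid : Submonoid (ℝ →ᵇ ℂ) where
  carrier := range expChar
  mul_mem' := by
    rintro _ _ ⟨a, rfl⟩ ⟨b, rfl⟩
    exact ⟨a + b, expChar_add a b⟩
  one_mem' := ⟨0, expChar_zero⟩

theorem trigPoly_eq_span : trigPoly = Submodule.span ℂ (range expChar) := by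
  ext f
  rw [SetLike.mem_coe, Submodule.mem_span_set']
  constructor
  · rintro ⟨N, a, lam, hf⟩
    exact ⟨N, a, fun j => ⟨expChar (lam j), lam j, rfl⟩, by ext t; simp [hf]⟩
  · rintro ⟨N, a, g, rfl⟩
    choose lam hlam using fun j => (g j).2
    exact ⟨N, a, lam, fun t => by simp [← hlam]⟩

theorem trigPoly_eq_adjoin : trigPoly = StarAlgebra.adjoin ℂ (range expChar) := by
  have hstar : range expChar ∪ star (range expChar) = range expChar := by
    refine union_eq_left.mpr ?_
    rintro f ⟨l, hl⟩
    exact ⟨-l, by rw [← star_expChar, hl, star_star]⟩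
  rw [trigPoly_eq_span, ← StarSubalgebra.coe_toSubalgebra, ← Subalgebra.coe_toSubmodule,
    StarAlgebra.adjoin_eq_span, hstar,
    show Submonoid.closure (range expChar) = expCharSubmonoid from
      Submonoid.closure_eq expCharSubmonoid]
  rfl

theorem AP_eq_topologicalClosure :
    AP = (StarAlgebra.adjoin ℂ (range expChar)).topologicalClosure := by
  rw [AP, trigPoly_eq_adjoin, StarSubalgebra.topologicalClosure_coe]

/-- An element `F ∈ AP` is invertible in `AP` iff `|F|` is bounded away from zero. -/
theorem invertible_iff_bounded_below (F : BoundedContinuousFunction ℝ ℂ) (hF : F ∈ AP) :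
    (∃ G ∈ AP, ∀ t : ℝ, F t * G t = 1) ↔ (∃ δ > 0, ∀ t : ℝ, δ ≤ ‖F t‖) := by
  constructor
  · rintro ⟨G, -, hFG⟩
    exact exists_le_norm_of_mul_eq_one hFG
  · rintro ⟨δ, hδ, hF_ge⟩
    rw [AP_eq_topologicalClosure] at hF ⊢
    have := (StarAlgebra.adjoin ℂ (range expChar)).isClosed_topologicalClosure
    obtain ⟨G, hG, hFG⟩ :=
      StarSubalgebra.exists_mul_eq_one_of_isUnit _ hF (isUnit_of_le_norm hδ hF_ge)
    exact ⟨G, hG, fun t => by simpa using congrArg (· t) hFG⟩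
end
end

section
/- Let f be a bounded continuous function on the open upper half-plane ℂ⁺ = {z ∈ ℂ : Im z > 0} that lies in the sup-norm closure (in the bounded continuous functions on ℂ⁺) of the set of functions z ↦ Σ_{j=1}^n a_j·exp(i·λ_j·z) with a_j ∈ ℂ and λ_j ≥ 0. Then f extends to a continuous function f̃ on the closed upper half-plane {z : Im z ≥ 0}, the boundary function f* := f̃|ℝ belongs to AP⁺, and sup_{z∈ℂ⁺}|f(z)| = sup_{t∈ℝ}|f*(t)|. -/
open Complex MeasureTheory Filter Topology

noncomputable section

/-- `AP⁺`: the sup-norm closure of trigonometric polynomials with nonnegative frequencies. -/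
def APplus : Set (BoundedContinuousFunction ℝ ℂ) :=
  closure {f | ∃ (N : ℕ) (a : Fin N → ℂ) (lam : Fin N → ℝ), (∀ j, 0 ≤ lam j) ∧
    ∀ t : ℝ, f t = ∑ j, a j * Complex.exp (Complex.I * lam j * t)}

open scoped BoundedContinuousFunction

/-! Analytic trigonometric polynomials with nonnegative frequencies are entire and bounded on
the closed upper half-plane, so by Phragmén–Lindelöf their supremum there is their supremum on
`ℝ`. A sequence of them converging uniformly to `f` on the open half-plane is, by continuity,
uniformly Cauchy on the closed one; its uniform limit `g` extends `f`, its restrictions to `ℝ`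
converge in sup norm to `g|ℝ`, which therefore lies in `AP⁺`, and letting `n → ∞` in
`‖Pₙ z‖ ≤ sup_ℝ ‖Pₙ‖` gives the equality of suprema. -/

theorem UniformCauchySeqOn.closure {ι α β : Type*} [TopologicalSpace α] [UniformSpace β]
    {F : ι → α → β} {p : Filter ι} {s : Set α} (h : UniformCauchySeqOn F p s)
    (hc : ∀ i, ContinuousOn (F i) (closure s)) : UniformCauchySeqOn F p (closure s) := by
  intro u hu
  obtain ⟨V, ⟨hV, hVc⟩, hVu⟩ := uniformity_hasBasis_closed.mem_iff.1 hu
  filter_upwards [h V hV] with ij hij x hx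
  have hmem := ((hc ij.1).prodMk (hc ij.2)).image_closure ⟨x, hx, rfl⟩
  exact hVu (closure_minimal (Set.image_subset_iff.2 hij) hVc hmem)

theorem UniformCauchySeqOn.exists_tendstoUniformlyOn {ι α β : Type*} [UniformSpace β]
    [CompleteSpace β] [Nonempty β] {F : ι → α → β} {p : Filter ι} [p.NeBot] {s : Set α}
    (h : UniformCauchySeqOn F p s) : ∃ g, TendstoUniformlyOn F g p s :=
  ⟨fun x => limUnder p (F · x), h.tendstoUniformlyOn_of_tendsto fun _ hx =>
    tendsto_nhds_limUnder (cauchy_map_iff_exists_tendsto.1 (h.cauchy_map hx))⟩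

theorem TendstoUniformlyOn.exists_tendstoUniformlyOn_closure {ι α β : Type*}
    [TopologicalSpace α] [UniformSpace β] [CompleteSpace β] [T2Space β] [Nonempty β]
    {F : ι → α → β} {f : α → β} {p : Filter ι} [p.NeBot] {s : Set α}
    (h : TendstoUniformlyOn F f p s) (hc : ∀ i, ContinuousOn (F i) (closure s)) :
    ∃ g, TendstoUniformlyOn F g p (closure s) ∧ Set.EqOn g f s := by
  obtain ⟨g, hg⟩ := (h.uniformCauchySeqOn.closure hc).exists_tendstoUniformlyOn
  exact ⟨g, hg, fun x hx =>
    tendsto_nhds_unique (hg.tendsto_at (subset_closure hx)) (h.tendsto_at hx)⟩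

theorem BoundedContinuousFunction.exists_coe_eq_tendsto_of_tendstoUniformly {ι α β : Type*}
    [TopologicalSpace α] [PseudoMetricSpace β] {F : ι → α →ᵇ β} {g : α → β} {p : Filter ι}
    [p.NeBot] (h : TendstoUniformly (fun i => ⇑(F i)) g p) :
    ∃ G : α →ᵇ β, ⇑G = g ∧ Tendsto F p (𝓝 G) := by
  obtain ⟨i, hi⟩ := (Metric.tendstoUniformly_iff.1 h 1 one_pos).exists
  obtain ⟨C, hC⟩ := (F i).bounded
  have hg : Continuous g := h.continuous (Frequently.of_forall fun i => (F i).continuous)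
  refine ⟨.mkOfBound ⟨g, hg⟩ (1 + C + 1) fun x y => ?_, rfl, tendsto_iff_tendstoUniformly.2 h⟩
  calc dist (g x) (g y) ≤ dist (g x) (F i x) + dist (F i x) (F i y) + dist (F i y) (g y) :=
        dist_triangle4 _ _ _ _
    _ ≤ 1 + C + 1 := by
        gcongr
        · exact (hi x).le
        · exact hC x y
        · rw [dist_comm]; exact (hi y).le

theorem norm_le_of_bounded_on_upper_half_plane {E : Type*} [NormedAddCommGroup E]
    [NormedSpace ℂ E] {h : ℂ → E} {C : ℝ} {z : ℂ} (hd : DiffContOnCl ℂ h {w | 0 < w.im})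
    (hB : ∃ B, ∀ w : ℂ, 0 < w.im → ‖h w‖ ≤ B) (hC : ∀ t : ℝ, ‖h t‖ ≤ C) (hz : 0 ≤ z.im) :
    ‖h z‖ ≤ C := by
  obtain ⟨B, hB⟩ := hB
  have hrot : ∀ w : ℂ, (I * w).im = w.re := by simp
  have key := PhragmenLindelof.right_half_plane_of_bounded_on_real (f := fun w => h (I * w))
    (z := -I * z) (C := C) (hd.comp (differentiable_id.const_mul I).diffContOnCl fun w hw => by
      simpa [hrot] using hw)
    ⟨0, two_pos, 0, Asymptotics.IsBigO.of_bound B <| eventually_inf_principal.2 <|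
      Eventually.of_forall fun w hw => by simpa using hB _ (by simpa [hrot] using hw)⟩
    ⟨B, eventually_map.2 <| (eventually_gt_atTop 0).mono fun x hx => hB _ (by simpa using hx)⟩
    (fun x => by
      rw [show I * (x * I) = ((-x : ℝ) : ℂ) by push_cast; linear_combination (x : ℂ) * I_sq]
      exact hC (-x)) (by simpa using hz)
  simpa [← mul_assoc] using key

structure AnalyticTrigPoly where
  N : ℕ
  a : Fin N → ℂ
  lam : Fin N → ℝ
  lam_nonneg : ∀ j, 0 ≤ lam j

namespace AnalyticTrigPoly

def toFun (P : AnalyticTrigPoly) (z : ℂ) : ℂ := ∑ j, P.a j * exp (I * P.lam j * z)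

instance : CoeFun AnalyticTrigPoly (fun _ => ℂ → ℂ) := ⟨toFun⟩

variable (P : AnalyticTrigPoly)

theorem differentiable : Differentiable ℂ P :=
  Differentiable.fun_sum fun j _ =>
    ((differentiable_id.const_mul (I * P.lam j)).cexp).const_mul (P.a j)

theorem norm_le_sum {z : ℂ} (hz : 0 ≤ z.im) : ‖P z‖ ≤ ∑ j, ‖P.a j‖ := by
  refine (norm_sum_le _ _).trans (Finset.sum_le_sum fun j _ => ?_)
  have hexp : ‖exp (I * P.lam j * z)‖ ≤ 1 := by
    rw [norm_exp, Real.exp_le_one_iff]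
    simpa [mul_re] using mul_nonneg (P.lam_nonneg j) hz
  simpa [norm_mul] using mul_le_of_le_one_right (norm_nonneg (P.a j)) hexp

def boundary : ℝ →ᵇ ℂ :=
  .ofNormedAddCommGroup (fun t : ℝ => P t) (P.differentiable.continuous.comp continuous_ofReal)
    (∑ j, ‖P.a j‖) fun t => P.norm_le_sum (by simp)

theorem boundary_mem_APplus : P.boundary ∈ APplus :=
  subset_closure ⟨P.N, P.a, P.lam, P.lam_nonneg, fun _ => rfl⟩

theorem norm_le_norm_boundary {z : ℂ} (hz : 0 ≤ z.im) : ‖P z‖ ≤ ‖P.boundary‖ :=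
  norm_le_of_bounded_on_upper_half_plane P.differentiable.diffContOnCl
    ⟨_, fun _ hw => P.norm_le_sum hw.le⟩ P.boundary.norm_coe_le_norm hz

theorem exists_seq_tendstoUniformlyOn {f : ℂ → ℂ} {s : Set ℂ}
    (h : ∀ ε > (0 : ℝ), ∃ (n : ℕ) (a : Fin n → ℂ) (lam : Fin n → ℝ), (∀ j, 0 ≤ lam j) ∧
      ∀ z ∈ s, ‖f z - ∑ j, a j * exp (I * lam j * z)‖ ≤ ε) :
    ∃ P : ℕ → AnalyticTrigPoly, TendstoUniformlyOn (fun n => ⇑(P n)) f atTop s := by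
  have hP : ∀ n : ℕ, ∃ P : AnalyticTrigPoly, ∀ z ∈ s, ‖f z - P z‖ ≤ 1 / (n + 1) := fun n => by
    obtain ⟨N, a, lam, hlam, happrox⟩ := h _ Nat.one_div_pos_of_nat
    exact ⟨⟨N, a, lam, hlam⟩, happrox⟩
  choose P hP using hP
  refine ⟨P, Metric.tendstoUniformlyOn_iff.2 fun ε hε => ?_⟩
  filter_upwards [tendsto_one_div_add_atTop_nhds_zero_nat.eventually (gt_mem_nhds hε)]
    with n hn z hz
  rw [dist_eq_norm]
  exact (hP n z hz).trans_lt hn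

end AnalyticTrigPoly

theorem iSup_norm_upper_half_plane_eq {g : ℂ → ℂ} {F : ℝ →ᵇ ℂ}
    (hg : ContinuousOn g {z | 0 ≤ z.im}) (hFg : ∀ t : ℝ, F t = g t)
    (hgF : ∀ z : ℂ, 0 ≤ z.im → ‖g z‖ ≤ ‖F‖) :
    ⨆ z : {z : ℂ // 0 < z.im}, ‖g z.1‖ = ⨆ t : ℝ, ‖F t‖ := by
  have : Nonempty {z : ℂ // 0 < z.im} := ⟨⟨I, by simp⟩⟩
  have hbdd : BddAbove (Set.range fun z : {z : ℂ // 0 < z.im} => ‖g z.1‖) :=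
    ⟨‖F‖, Set.forall_mem_range.2 fun z => hgF z z.2.le⟩
  have hsup_nonneg : 0 ≤ ⨆ z : {z : ℂ // 0 < z.im}, ‖g z.1‖ :=
    le_ciSup_of_le hbdd ⟨I, by simp⟩ (norm_nonneg _)
  have hcont : ContinuousOn (fun z => ‖g z‖) (closure {z : ℂ | 0 < z.im}) := by
    rw [closure_setOfPred_lt_im]
    exact hg.norm
  rw [← F.norm_eq_iSup_norm]
  refine le_antisymm (ciSup_le fun z => hgF z z.2.le) ((F.norm_le hsup_nonneg).2 fun t => ?_)
  have ht : (t : ℂ) ∈ closure {z : ℂ | 0 < z.im} := by simp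
  rw [hFg]
  exact le_on_closure (fun z hz => le_ciSup hbdd ⟨z, hz⟩) hcont continuousOn_const ht

theorem APplus_hol_boundary_general (f : ℂ → ℂ)
    (happrox : ∀ ε > (0 : ℝ), ∃ (n : ℕ) (a : Fin n → ℂ) (lam : Fin n → ℝ),
      (∀ j, 0 ≤ lam j) ∧
      ∀ z : ℂ, 0 < z.im → ‖f z - ∑ j, a j * Complex.exp (Complex.I * lam j * z)‖ ≤ ε) :
    ∃ g : ℂ → ℂ, ContinuousOn g {z : ℂ | 0 ≤ z.im} ∧
      (∀ z : ℂ, 0 < z.im → g z = f z) ∧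
      ∃ F : BoundedContinuousFunction ℝ ℂ,
        (∀ t : ℝ, F t = g t) ∧ F ∈ APplus ∧
        ((⨆ z : {z : ℂ // 0 < z.im}, ‖f z.1‖) = ⨆ t : ℝ, ‖F t‖) := by
  obtain ⟨P, hPf⟩ := AnalyticTrigPoly.exists_seq_tendstoUniformlyOn (s := {z | 0 < z.im}) happrox
  have hPc : ∀ n, Continuous (P n) := fun n => (P n).differentiable.continuous
  obtain ⟨g, hPg, hgf⟩ := hPf.exists_tendstoUniformlyOn_closure fun n => (hPc n).continuousOn
  rw [closure_setOfPred_lt_im] at hPg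
  have hgc : ContinuousOn g {z | 0 ≤ z.im} :=
    hPg.continuousOn (Frequently.of_forall fun n => (hPc n).continuousOn)
  have hPgℝ : TendstoUniformly (fun n => ⇑(P n).boundary) (fun t : ℝ => g t) atTop :=
    tendstoUniformlyOn_univ.1 ((hPg.comp ofReal).mono fun t _ => by simp)
  obtain ⟨F, hFg, hPF⟩ :=
    BoundedContinuousFunction.exists_coe_eq_tendsto_of_tendstoUniformly hPgℝ
  have hgF : ∀ z : ℂ, 0 ≤ z.im → ‖g z‖ ≤ ‖F‖ := fun z hz =>
    le_of_tendsto_of_tendsto' (hPg.tendsto_at hz).norm hPF.norm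
      fun n => (P n).norm_le_norm_boundary hz
  refine ⟨g, hgc, hgf, F, congrFun hFg, isClosed_closure.mem_of_tendsto hPF
    (Eventually.of_forall fun n => (P n).boundary_mem_APplus), ?_⟩
  rw [← iSup_norm_upper_half_plane_eq hgc (congrFun hFg) hgF]
  exact iSup_congr fun z => by rw [hgf z.2]

/-- A function in the closure (in the bounded continuous functions on the open upper
half-plane) of the analytic trigonometric polynomials extends continuously to the closed
upper half-plane, its boundary function lies in `AP⁺`, and the sup norms agree. -/
theorem APplus_hol_boundary (f : ℂ → ℂ)
    (hc : ContinuousOn f {z : ℂ | 0 < z.im})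
    (hb : ∃ M : ℝ, ∀ z : ℂ, 0 < z.im → ‖f z‖ ≤ M)
    (happrox : ∀ ε > (0 : ℝ), ∃ (n : ℕ) (a : Fin n → ℂ) (lam : Fin n → ℝ),
      (∀ j, 0 ≤ lam j) ∧
      ∀ z : ℂ, 0 < z.im → ‖f z - ∑ j, a j * Complex.exp (Complex.I * lam j * z)‖ ≤ ε) :
    ∃ g : ℂ → ℂ, ContinuousOn g {z : ℂ | 0 ≤ z.im} ∧
      (∀ z : ℂ, 0 < z.im → g z = f z) ∧
      ∃ F : BoundedContinuousFunction ℝ ℂ,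
        (∀ t : ℝ, F t = g t) ∧ F ∈ APplus ∧
        ((⨆ z : {z : ℂ // 0 < z.im}, ‖f z.1‖) = ⨆ t : ℝ, ‖F t‖) :=
  APplus_hol_boundary_general f happrox
end
end
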